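/- In Blackwell's example, if p is a probability distribution on states assigning positive probability to every primary state, then for any ε < 1 there is no stationary plan f with p{I(f) > u* − ε} = 1; i.e., no (p,ε)-optimal stationary plan exists. -/

import Mathlib

open MeasureTheory
open scoped ENNReal

/-- States of Blackwell's example: primary states `p n`, secondary states `s n`
(meaningful for `n ≥ 1`), and the terminal state `t`. -/
inductive BS
  | p : ℕ → BS
  | s : ℕ → BS
  | t : BS
  deriving DecidableEq

instance : MeasurableSpace BS := ⊤
instance : Inhabited BS := ⟨BS.t⟩

/-- Actions: `cont` (move to the next primary state or terminal, each w.p. 1/2) and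
`switch` (move to the secondary state `s (2^n - 1)`).  In secondary and terminal
states both actions have the same effect. -/
inductive Act
  | cont : Act
  | switch : Act
  deriving DecidableEq

instance : MeasurableSpace Act := ⊤
instance : Inhabited Act := ⟨Act.cont⟩

/-- Transition law of Blackwell's example. -/
noncomputable def bq : BS → Act → Measure BS
  | .p n, .cont => (1 / 2 : ℝ≥0∞) • Measure.dirac (.p (n + 1)) +
      (1 / 2 : ℝ≥0∞) • Measure.dirac .t
  | .p n, .switch => Measure.dirac (.s (2 ^ n - 1))
  | .s n, _ => Measure.dirac (if n ≤ 1 then .t else .s (n - 1))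
  | .t, _ => Measure.dirac .t

/-- Reward function: each step in a secondary state pays 1, all other steps pay 0
(the income `2^n - 1` of choosing `switch` at `p n` is collected along the
secondary chain `s (2^n - 1) → ⋯ → s 1 → t`). -/
noncomputable def br : BS → Act → BS → ℝ
  | .s _, _, _ => 1
  | _, _, _ => 0

/-- Finite-horizon expected return of a (history-dependent, randomized) plan. -/
noncomputable def finVal {S A : Type*} [MeasurableSpace S] [MeasurableSpace A] [Inhabited S]
    (q : S → A → Measure S) (r : S → A → S → ℝ)
    (π : List S → Measure A) : ℕ → List S → ℝ
  | 0, _ => 0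
  | n + 1, h => ∫ a, ∫ y, (r h.headI a y + finVal q r π n (y :: h)) ∂(q h.headI a) ∂(π h)

/-- Total expected (undiscounted) return `I(π)(s)` of the plan `π` from state `s`. -/
noncomputable def totalReturn {S A : Type*} [MeasurableSpace S] [MeasurableSpace A] [Inhabited S]
    (q : S → A → Measure S) (r : S → A → S → ℝ)
    (π : List S → Measure A) (s : S) : ℝ :=
  ⨆ n : ℕ, finVal q r π n [s]

/-- The plan associated with a stationary plan `f : BS → Act`. -/
noncomputable def stationaryPlan (f : BS → Act) : List BS → Measure Act :=
  fun h => Measure.dirac (f h.headI)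

/-- Optimal return `u*(s) = sup_π I(π)(s)` in Blackwell's example. -/
noncomputable def ustar (s : BS) : ℝ :=
  ⨆ π : {π : List BS → Measure Act // ∀ h, IsProbabilityMeasure (π h)},
    totalReturn bq br π.1 s

/-!
The function `valueBound` (`2 ^ m` at `p m`, `max j 1` at `s j`, `0` at `t`) is excessive: one
step of any action followed by a continuation bounded by it stays below it. Hence every plan earns
at most `2 ^ m` from `p m`, which makes `u*` finite. Continuing from `p n` up to `p (n + k)` and
then switching earns `2 ^ n - 2⁻ᵏ`, so `u*(p n) ≥ 2 ^ n`. A stationary plan that switches at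
some `p n` with `n ≥ 1` earns at most `2 ^ n - 1` there, and one that never switches earns
nothing from `p 1`. Either way it misses `u*` by at least `1 > ε` at a primary state, which
carries positive mass.
-/

theorem integral_le_of_forall_le {α : Type*} [MeasurableSpace α] {μ : Measure α}
    [IsProbabilityMeasure μ] {F : α → ℝ} {C : ℝ} (hC : 0 ≤ C) (hF : ∀ x, F x ≤ C) :
    ∫ x, F x ∂μ ≤ C := by
  by_cases hint : Integrable F μ
  · simpa using integral_mono hint (integrable_const C) hF
  · simpa [integral_undef hint] using hC

theorem integral_bq_primary_cont (F : BS → ℝ) (m : ℕ) :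
    ∫ y, F y ∂bq (.p m) .cont = (F (.p (m + 1)) + F .t) / 2 := by
  have hint (x : BS) : Integrable F (Measure.dirac x) := by
    refine ⟨Measurable.of_discrete.aestronglyMeasurable, ?_⟩
    simp [HasFiniteIntegral, lintegral_dirac]
  rw [bq, integral_add_measure ((hint _).smul_measure (by simp)) ((hint _).smul_measure (by simp)),
    integral_smul_measure, integral_smul_measure, integral_dirac, integral_dirac]
  norm_num
  ring

theorem bq_secondary (j : ℕ) (a : Act) :
    bq (.s j) a = Measure.dirac (if j ≤ 1 then .t else .s (j - 1)) := by
  cases a <;> rfl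

theorem bq_terminal (a : Act) : bq .t a = Measure.dirac .t := by
  cases a <;> rfl

-- From `s j` the chain pays one per step down to `t`, and `s 0` still pays once.
noncomputable def valueBound : BS → ℝ
  | .p m => 2 ^ m
  | .s j => max (j : ℝ) 1
  | .t => 0

theorem valueBound_nonneg (x : BS) : 0 ≤ valueBound x := by
  cases x <;> simp only [valueBound] <;> positivity

theorem integral_br_add_le_valueBound (x : BS) (a : Act) {v : BS → ℝ}
    (hv : ∀ y, v y ≤ valueBound y) :
    ∫ y, br x a y + v y ∂bq x a ≤ valueBound x := by
  match x, a with
  | .p m, .cont =>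
    have := hv (.p (m + 1))
    have := hv .t
    simp only [integral_bq_primary_cont, br, valueBound, pow_succ] at *
    linarith
  | .p m, .switch =>
    have := hv (.s (2 ^ m - 1))
    rw [bq, integral_dirac]
    simp only [br, valueBound, zero_add] at *
    refine this.trans (max_le ?_ (one_le_pow₀ one_le_two))
    exact_mod_cast Nat.sub_le _ _
  | .s j, a =>
    rw [bq_secondary, integral_dirac]
    split_ifs with hj
    · have := hv .t
      simp only [br, valueBound] at *
      linarith [le_max_right (j : ℝ) 1]
    · have := hv (.s (j - 1))
      simp only [br, valueBound] at *
      have hj1 : (2 : ℝ) ≤ j := by exact_mod_cast (by omega : 2 ≤ j)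
      rw [Nat.cast_sub (by omega), Nat.cast_one, max_eq_left (by linarith)] at this
      linarith [le_max_left (j : ℝ) 1]
  | .t, a =>
    have := hv .t
    rw [bq_terminal, integral_dirac]
    simpa only [br, valueBound, zero_add] using this

section Bounds

variable (π : List BS → Measure Act)

theorem finVal_le_valueBound (hπ : ∀ h, IsProbabilityMeasure (π h)) (N : ℕ) (x : BS)
    (h : List BS) :
    finVal bq br π N (x :: h) ≤ valueBound x := by
  induction N generalizing x h with
  | zero => exact valueBound_nonneg x
  | succ N ih =>
    have := hπ (x :: h)
    exact integral_le_of_forall_le (valueBound_nonneg x) fun a =>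
      integral_br_add_le_valueBound x a fun y => ih y (x :: h)

theorem bddAbove_finVal (hπ : ∀ h, IsProbabilityMeasure (π h)) (x : BS) :
    BddAbove (Set.range fun N => finVal bq br π N [x]) :=
  ⟨valueBound x, Set.forall_mem_range.2 fun N => finVal_le_valueBound π hπ N x []⟩

theorem finVal_le_totalReturn (hπ : ∀ h, IsProbabilityMeasure (π h)) (N : ℕ) (x : BS) :
    finVal bq br π N [x] ≤ totalReturn bq br π x :=
  le_ciSup (bddAbove_finVal π hπ x) N

theorem totalReturn_le_valueBound (hπ : ∀ h, IsProbabilityMeasure (π h)) (x : BS) :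
    totalReturn bq br π x ≤ valueBound x :=
  ciSup_le fun N => finVal_le_valueBound π hπ N x []

end Bounds

theorem isProbabilityMeasure_stationaryPlan (g : BS → Act) (h : List BS) :
    IsProbabilityMeasure (stationaryPlan g h) := by
  unfold stationaryPlan; infer_instance

theorem totalReturn_stationaryPlan_le_ustar (g : BS → Act) (x : BS) :
    totalReturn bq br (stationaryPlan g) x ≤ ustar x := by
  refine le_ciSup
    (f := fun π : {π : List BS → Measure Act // ∀ h, IsProbabilityMeasure (π h)} =>
      totalReturn bq br π.1 x) ?_ ⟨_, isProbabilityMeasure_stationaryPlan g⟩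
  exact ⟨valueBound x, Set.forall_mem_range.2 fun π => totalReturn_le_valueBound π.1 π.2 x⟩

section Stationary

variable (g : BS → Act)

theorem finVal_stationaryPlan_succ (N : ℕ) (x : BS) (h : List BS) :
    finVal bq br (stationaryPlan g) (N + 1) (x :: h) =
      ∫ y, br x (g x) y + finVal bq br (stationaryPlan g) N (y :: x :: h) ∂bq x (g x) :=
  integral_dirac _ _

theorem finVal_stationaryPlan_terminal (N : ℕ) (h : List BS) :
    finVal bq br (stationaryPlan g) N (.t :: h) = 0 := by
  induction N generalizing h with
  | zero => rfl
  | succ N ih => simp [finVal_stationaryPlan_succ, bq_terminal, br, ih]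

theorem finVal_stationaryPlan_secondary {N j : ℕ} (hN : N ≤ j) (h : List BS) :
    finVal bq br (stationaryPlan g) N (.s j :: h) = N := by
  induction N generalizing j h with
  | zero => simp [finVal]
  | succ N ih =>
    rw [finVal_stationaryPlan_succ, bq_secondary, integral_dirac]
    split_ifs with hj
    · obtain rfl : N = 0 := by omega
      simp [br, finVal_stationaryPlan_terminal]
    · rw [ih (by omega : N ≤ j - 1)]
      simp only [br, Nat.cast_add, Nat.cast_one]
      ring

theorem finVal_stationaryPlan_primary_cont {m : ℕ} (hg : g (.p m) = .cont) (N : ℕ)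
    (h : List BS) :
    finVal bq br (stationaryPlan g) (N + 1) (.p m :: h) =
      finVal bq br (stationaryPlan g) N (.p (m + 1) :: .p m :: h) / 2 := by
  simp [finVal_stationaryPlan_succ, hg, integral_bq_primary_cont, br,
    finVal_stationaryPlan_terminal]

theorem finVal_stationaryPlan_primary_switch {m : ℕ} (hg : g (.p m) = .switch) (N : ℕ)
    (h : List BS) :
    finVal bq br (stationaryPlan g) (N + 1) (.p m :: h) =
      finVal bq br (stationaryPlan g) N (.s (2 ^ m - 1) :: .p m :: h) := by
  rw [finVal_stationaryPlan_succ, hg, bq, integral_dirac]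
  simp [br]

end Stationary

def switchAt (M : ℕ) : BS → Act
  | .p m => if m < M then .cont else .switch
  | _ => .cont

theorem finVal_switchAt {M : ℕ} (d m : ℕ) (hM : m + d = M) (h : List BS) :
    finVal bq br (stationaryPlan (switchAt M)) (d + 2 ^ M) (.p m :: h) =
      (2 ^ M - 1) / 2 ^ d := by
  induction d generalizing m h with
  | zero =>
    obtain rfl : m = M := hM
    have hpos : 1 ≤ 2 ^ m := Nat.one_le_two_pow
    rw [zero_add, ← Nat.sub_add_cancel hpos,
      finVal_stationaryPlan_primary_switch _ (by simp [switchAt]),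
      finVal_stationaryPlan_secondary _ le_rfl]
    push_cast [hpos]
    ring
  | succ d ih =>
    rw [add_right_comm, finVal_stationaryPlan_primary_cont _ (by simp [switchAt]; omega),
      ih (m + 1) (by omega), pow_succ]
    field_simp

theorem two_pow_le_ustar (n : ℕ) : 2 ^ n ≤ ustar (.p n) := by
  have hlim : Filter.Tendsto (fun k : ℕ => (2 : ℝ) ^ n - (1 / 2) ^ k) Filter.atTop
      (nhds (2 ^ n)) := by
    simpa using (tendsto_pow_atTop_nhds_zero_of_lt_one (by norm_num : (0 : ℝ) ≤ 1 / 2)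
      (by norm_num)).const_sub ((2 : ℝ) ^ n)
  refine le_of_tendsto' hlim fun k => ?_
  have hval := finVal_switchAt (M := n + k) k n rfl []
  have hk : ((2 : ℝ) ^ (n + k) - 1) / 2 ^ k = 2 ^ n - (1 / 2) ^ k := by
    rw [pow_add, one_div_pow]; field_simp
  rw [← hk, ← hval]
  exact (finVal_le_totalReturn _ (isProbabilityMeasure_stationaryPlan _) _ _).trans
    (totalReturn_stationaryPlan_le_ustar _ _)

theorem totalReturn_le_of_switch {g : BS → Act} {n : ℕ} (hn : 1 ≤ n)
    (hg : g (.p n) = .switch) :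
    totalReturn bq br (stationaryPlan g) (.p n) ≤ 2 ^ n - 1 := by
  have hpow : (2 : ℝ) ≤ 2 ^ n := by simpa using pow_le_pow_right₀ one_le_two hn
  refine ciSup_le fun N => ?_
  cases N with
  | zero => simp only [finVal]; linarith
  | succ N =>
    rw [finVal_stationaryPlan_primary_switch g hg]
    refine (finVal_le_valueBound _ (isProbabilityMeasure_stationaryPlan g) _ _ _).trans ?_
    rw [valueBound, Nat.cast_sub Nat.one_le_two_pow]
    push_cast
    exact max_le le_rfl (by linarith)

theorem totalReturn_eq_zero_of_forall_cont {g : BS → Act} {n : ℕ}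
    (hg : ∀ k, n ≤ k → g (.p k) = .cont) :
    totalReturn bq br (stationaryPlan g) (.p n) = 0 := by
  have hzero (N : ℕ) :
      ∀ m, n ≤ m → ∀ h, finVal bq br (stationaryPlan g) N (.p m :: h) = 0 := by
    induction N with
    | zero => intros; rfl
    | succ N ih =>
      intro m hm h
      rw [finVal_stationaryPlan_primary_cont g (hg m hm), ih (m + 1) (by omega), zero_div]
  simp [totalReturn, hzero _ n le_rfl]

theorem exists_totalReturn_le_ustar_sub_one (g : BS → Act) :
    ∃ n, 1 ≤ n ∧ totalReturn bq br (stationaryPlan g) (.p n) ≤ ustar (.p n) - 1 := by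
  by_cases H : ∃ n, 1 ≤ n ∧ g (.p n) = .switch
  · obtain ⟨n, hn, hg⟩ := H
    exact ⟨n, hn, (totalReturn_le_of_switch hn hg).trans (by linarith [two_pow_le_ustar n])⟩
  · have hcont (k : ℕ) (hk : 1 ≤ k) : g (.p k) = .cont := by
      cases hgk : g (.p k)
      · rfl
      · exact absurd ⟨k, hk, hgk⟩ H
    refine ⟨1, le_rfl, ?_⟩
    rw [totalReturn_eq_zero_of_forall_cont hcont]
    linarith [two_pow_le_ustar 1]

theorem blackwell_no_p_eps_optimal_stationary_general
    (μ : Measure BS) [IsProbabilityMeasure μ]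
    (hμ : ∀ n : ℕ, 1 ≤ n → 0 < μ {BS.p n})
    (ε : ℝ) (hε1 : ε < 1) :
    ¬ ∃ f : BS → Act,
        μ {x : BS | ustar x - ε < totalReturn bq br (stationaryPlan f) x} = 1 := by
  rintro ⟨f, hf⟩
  obtain ⟨n, hn, hfar⟩ := exists_totalReturn_le_ustar_sub_one f
  have hnull := (prob_compl_eq_zero_iff MeasurableSet.of_discrete).2 hf
  refine (hμ n hn).ne' (measure_mono_null ?_ hnull)
  simp only [Set.singleton_subset_iff, Set.mem_compl_iff, Set.mem_ofPred_eq, not_lt]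
  linarith

/-- In Blackwell's example, if `p` assigns positive probability to every primary state,
then for any `ε < 1` there is no `(p,ε)`-optimal stationary plan: no stationary `f`
satisfies `I(f) > u* - ε` with `p`-probability 1. -/
theorem blackwell_no_p_eps_optimal_stationary
    (μ : Measure BS) [IsProbabilityMeasure μ]
    (hμ : ∀ n : ℕ, 1 ≤ n → 0 < μ {BS.p n})
    (ε : ℝ) (hε0 : 0 < ε) (hε1 : ε < 1) :
    ¬ ∃ f : BS → Act,
        μ {x : BS | ustar x - ε < totalReturn bq br (stationaryPlan f) x} = 1 :=
  blackwell_no_p_eps_optimal_stationary_general μ hμ ε hε1
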